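/- arXiv:2605.12679 — 5 statements merged into one kernel-verified Lean document; each statement's English description precedes it below -/
import Mathlib

section
/- Let L_φ be the Bregman divergence of a differentiable convex function φ. Then the miscalibration term of Murphy's decomposition satisfies E[L_φ(Y, X)] − E[L_φ(Y, E[Y|X])] = E[L_φ(E[Y|X], X)], and in particular this quantity is nonnegative. -/
/-!
With `Z = E[Y | X]`, the three-point identity for Bregman divergences reads
`L(Y, X) - L(Y, Z) - L(Z, X) = (φ'(Z) - φ'(X)) (Y - Z)`. The first factor is `σ(X)`-measurable
and `Y - Z` has zero conditional expectation given `X`, so the cross term integrates to zero.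
Nonnegativity is the tangent-line inequality for the convex function `φ`.
-/

open MeasureTheory ProbabilityTheory

noncomputable def bregmanDiv (φ : ℝ → ℝ) (y x : ℝ) : ℝ :=
  φ y - φ x - deriv φ x * (y - x)

lemma ConvexOn.bregmanDiv_nonneg {φ : ℝ → ℝ} {s : Set ℝ} (hφ : ConvexOn ℝ s φ) {x y : ℝ}
    (hx : x ∈ s) (hy : y ∈ s) (hdiff : DifferentiableAt ℝ φ x) : 0 ≤ bregmanDiv φ y x := by
  unfold bregmanDiv
  rcases lt_trichotomy x y with hxy | rfl | hyx
  · have hslope := hφ.deriv_le_slope hx hy hxy hdiff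
    rw [slope_def_field, le_div_iff₀ (sub_pos.mpr hxy)] at hslope
    linarith
  · simp
  · have hslope := hφ.slope_le_deriv hy hx hyx hdiff
    rw [slope_def_field, div_le_iff₀ (sub_pos.mpr hyx)] at hslope
    linarith

lemma bregmanDiv_three_point (φ : ℝ → ℝ) (y z x : ℝ) :
    bregmanDiv φ y x - bregmanDiv φ y z - bregmanDiv φ z x
      = (deriv φ z - deriv φ x) * (y - z) := by
  unfold bregmanDiv
  ring

lemma integral_mul_sub_condExp_eq_zero {Ω : Type*} {m m0 : MeasurableSpace Ω} {μ : Measure Ω}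
    (hm : m ≤ m0) [SigmaFinite (μ.trim hm)] {g Y : Ω → ℝ} (hg : AEStronglyMeasurable[m] g μ)
    (hY : Integrable Y μ) (hgY : Integrable (g * (Y - μ[Y | m])) μ) :
    ∫ ω, g ω * (Y ω - μ[Y | m] ω) ∂μ = 0 := by
  have hresidual : μ[Y - μ[Y | m] | m] =ᵐ[μ] 0 := by
    filter_upwards [condExp_sub hY integrable_condExp m] with ω hω
    rw [hω, condExp_of_stronglyMeasurable hm stronglyMeasurable_condExp integrable_condExp,
      Pi.sub_apply, sub_self, Pi.zero_apply]
  calc ∫ ω, g ω * (Y ω - μ[Y | m] ω) ∂μ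
      = ∫ ω, μ[g * (Y - μ[Y | m]) | m] ω ∂μ := (integral_condExp hm).symm
    _ = ∫ ω, g ω * μ[Y - μ[Y | m] | m] ω ∂μ :=
        integral_congr_ae (condExp_mul_of_aestronglyMeasurable_left hg hgY
          (hY.sub integrable_condExp))
    _ = 0 := integral_eq_zero_of_ae (by filter_upwards [hresidual] with ω hω; simp [hω])

theorem integral_bregmanDiv_sub_integral_bregmanDiv_condExp {Ω : Type*}
    {m m0 : MeasurableSpace Ω} {μ : Measure Ω} (hm : m ≤ m0) [SigmaFinite (μ.trim hm)]
    {φ : ℝ → ℝ} {Y X : Ω → ℝ} (hX : Measurable[m] X) (hY : Integrable Y μ)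
    (hYX : Integrable (fun ω => bregmanDiv φ (Y ω) (X ω)) μ)
    (hYZ : Integrable (fun ω => bregmanDiv φ (Y ω) (μ[Y | m] ω)) μ)
    (hZX : Integrable (fun ω => bregmanDiv φ (μ[Y | m] ω) (X ω)) μ) :
    ∫ ω, bregmanDiv φ (Y ω) (X ω) ∂μ - ∫ ω, bregmanDiv φ (Y ω) (μ[Y | m] ω) ∂μ
      = ∫ ω, bregmanDiv φ (μ[Y | m] ω) (X ω) ∂μ := by
  have hcross_meas : StronglyMeasurable[m] fun ω => deriv φ (μ[Y | m] ω) - deriv φ (X ω) :=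
    ((measurable_deriv φ).comp stronglyMeasurable_condExp.measurable
      |>.sub ((measurable_deriv φ).comp hX)).stronglyMeasurable
  have hcross := integral_mul_sub_condExp_eq_zero hm hcross_meas.aestronglyMeasurable hY
    (((hYX.sub hYZ).sub hZX).congr (.of_forall fun ω => bregmanDiv_three_point φ _ _ _))
  rw [← sub_eq_zero, ← integral_sub hYX hYZ, ← integral_sub (by exact hYX.sub hYZ) hZX]
  simpa only [bregmanDiv_three_point] using hcross

theorem murphy_miscalibration_eq_bregman_general
    {Ω : Type*} {m0 : MeasurableSpace Ω} (μ : Measure Ω) [IsProbabilityMeasure μ]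
    (Y X : Ω → ℝ) (hX : Measurable X) (hY : Integrable Y μ)
    (φ : ℝ → ℝ) (hconv : ConvexOn ℝ Set.univ φ) (hdiff : Differentiable ℝ φ)
    (L : ℝ → ℝ → ℝ) (hL : ∀ y x, L y x = φ y - φ x - deriv φ x * (y - x))
    (h1 : Integrable (fun ω => L (Y ω) (X ω)) μ)
    (h2 : Integrable
      (fun ω => L (Y ω) ((μ[Y | MeasurableSpace.comap X Real.measurableSpace]) ω)) μ)
    (h3 : Integrable
      (fun ω => L ((μ[Y | MeasurableSpace.comap X Real.measurableSpace]) ω) (X ω)) μ) :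
    ((∫ ω, L (Y ω) (X ω) ∂μ)
        - ∫ ω, L (Y ω) ((μ[Y | MeasurableSpace.comap X Real.measurableSpace]) ω) ∂μ
      = ∫ ω, L ((μ[Y | MeasurableSpace.comap X Real.measurableSpace]) ω) (X ω) ∂μ)
    ∧ 0 ≤ (∫ ω, L (Y ω) (X ω) ∂μ)
        - ∫ ω, L (Y ω) ((μ[Y | MeasurableSpace.comap X Real.measurableSpace]) ω) ∂μ := by
  obtain rfl : L = bregmanDiv φ := funext₂ hL
  have hmiscal := integral_bregmanDiv_sub_integral_bregmanDiv_condExp hX.comap_le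
    (comap_measurable X) hY h1 h2 h3
  refine ⟨hmiscal, hmiscal ▸ integral_nonneg fun ω => ?_⟩
  exact hconv.bregmanDiv_nonneg (Set.mem_univ _) (Set.mem_univ _) (hdiff _)

/-- Murphy miscalibration term equals a pure Bregman score:
`E[L_φ(Y, X)] − E[L_φ(Y, E[Y|X])] = E[L_φ(E[Y|X], X)] ≥ 0`. -/
theorem murphy_miscalibration_eq_bregman
    {Ω : Type*} {m0 : MeasurableSpace Ω} (μ : Measure Ω) [IsProbabilityMeasure μ]
    (Y X : Ω → ℝ) (hX : Measurable X) (hY : Integrable Y μ)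
    (φ : ℝ → ℝ) (hconv : ConvexOn ℝ Set.univ φ) (hdiff : Differentiable ℝ φ)
    (L : ℝ → ℝ → ℝ) (hL : ∀ y x, L y x = φ y - φ x - deriv φ x * (y - x))
    (hφY : Integrable (fun ω => φ (Y ω)) μ)
    (hφCE : Integrable
      (fun ω => φ ((μ[Y | MeasurableSpace.comap X Real.measurableSpace]) ω)) μ)
    (hφX : Integrable (fun ω => φ (X ω)) μ)
    (h1 : Integrable (fun ω => L (Y ω) (X ω)) μ)
    (h2 : Integrable
      (fun ω => L (Y ω) ((μ[Y | MeasurableSpace.comap X Real.measurableSpace]) ω)) μ)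
    (h3 : Integrable
      (fun ω => L ((μ[Y | MeasurableSpace.comap X Real.measurableSpace]) ω) (X ω)) μ) :
    ((∫ ω, L (Y ω) (X ω) ∂μ)
        - ∫ ω, L (Y ω) ((μ[Y | MeasurableSpace.comap X Real.measurableSpace]) ω) ∂μ
      = ∫ ω, L ((μ[Y | MeasurableSpace.comap X Real.measurableSpace]) ω) (X ω) ∂μ)
    ∧ 0 ≤ (∫ ω, L (Y ω) (X ω) ∂μ)
        - ∫ ω, L (Y ω) ((μ[Y | MeasurableSpace.comap X Real.measurableSpace]) ω) ∂μ :=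
  murphy_miscalibration_eq_bregman_general (m0 := m0) μ Y X hX hY φ hconv hdiff L hL h1 h2 h3
end

section
/- Under assumptions that E[Y]=E[X]>0, both supported on [0,∞), and F_X continuous and strictly increasing with F_X(0)=0: if ABC²(Y,X) := ∫₀¹ (CC_p(Y,X) − LC_p(X))² dp = 0, then E[Y|X] = X almost surely, i.e. X is mean-calibrated for Y. -/
open MeasureTheory ProbabilityTheory

/-- Distribution function of `X` under `μ`. -/
noncomputable def cdf' {Ω : Type*} [MeasurableSpace Ω] (μ : Measure Ω) (X : Ω → ℝ) :
    ℝ → ℝ :=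
  fun t => (μ {ω | X ω ≤ t}).toReal

/-- Generalized inverse (quantile function) of the cdf of `X`. -/
noncomputable def quantile {Ω : Type*} [MeasurableSpace Ω] (μ : Measure Ω) (X : Ω → ℝ)
    (p : ℝ) : ℝ :=
  sInf {x : ℝ | p ≤ cdf' μ X x}

/-- Lorenz curve `LC_p(X) = E[X·1{X ≤ F_X⁻¹(p)}] / E[X]`. -/
noncomputable def LC {Ω : Type*} [MeasurableSpace Ω] (μ : Measure Ω) (X : Ω → ℝ)
    (p : ℝ) : ℝ :=
  (∫ ω in {ω | X ω ≤ quantile μ X p}, X ω ∂μ) / ∫ ω, X ω ∂μ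

/-- Concentration curve `CC_p(Y,X) = E[Y·1{X ≤ F_X⁻¹(p)}] / E[Y]`. -/
noncomputable def CC {Ω : Type*} [MeasurableSpace Ω] (μ : Measure Ω) (Y X : Ω → ℝ)
    (p : ℝ) : ℝ :=
  (∫ ω in {ω | X ω ≤ quantile μ X p}, Y ω ∂μ) / ∫ ω, Y ω ∂μ

/-! With `G_f(t) = ∫_{X ≤ t} f dμ` and `F = cdf' μ X`, one has
`CC_p - LC_p = (G_Y - G_X)(F⁻¹(p)) / E[Y]`. Continuity of `F` makes `X` atomless, so `G_Y` and
`G_X` are continuous, and on `(0, 1)` the quantile is the continuous inverse of the increasing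
bijection `F : (0, ∞) → (0, 1)`. The integrand of `ABC²` is therefore continuous, nonnegative and
bounded by `1` on `(0, 1)`, so it vanishes identically there; hence `G_Y = G_X` on `(0, ∞)`, and
also on `(-∞, 0]` where `{X ≤ t}` is null. Then the finite measures `Y dμ` and `X dμ` have the
same law of `X`, i.e. `E[Y; X ∈ A] = E[X; X ∈ A]` for every Borel `A`, which characterises
`E[Y | X] = X`. -/

open Set Filter Topology

section DistributionFunction

variable {Ω : Type*} {m0 : MeasurableSpace Ω} {μ : Measure Ω} {X : Ω → ℝ}

lemma monotone_cdf' [IsFiniteMeasure μ] : Monotone (cdf' μ X) := fun _ _ hst =>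
  ENNReal.toReal_mono (measure_ne_top μ _) (measure_mono fun _ hω => le_trans hω hst)

lemma cdf'_eq_cdf_map [IsProbabilityMeasure μ] (hX : Measurable X) :
    cdf' μ X = cdf (μ.map X) := by
  have := Measure.isProbabilityMeasure_map (μ := μ) hX.aemeasurable
  ext t
  rw [cdf_eq_real, measureReal_def, Measure.map_apply hX measurableSet_Iic]
  rfl

lemma measure_preimage_singleton_eq_zero [IsProbabilityMeasure μ] (hX : Measurable X)
    (hF : Continuous (cdf' μ X)) (t : ℝ) : μ (X ⁻¹' {t}) = 0 := by
  have := Measure.isProbabilityMeasure_map (μ := μ) hX.aemeasurable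
  rw [cdf'_eq_cdf_map hX] at hF
  rw [← Measure.map_apply hX (measurableSet_singleton t), ← measure_cdf (μ.map X),
    StieltjesFunction.measure_singleton, hF.continuousWithinAt.leftLim_eq, sub_self,
    ENNReal.ofReal_zero]

lemma cdf'_mem_Ioo [IsProbabilityMeasure μ] (hF : StrictMonoOn (cdf' μ X) (Ici 0))
    (hF0 : cdf' μ X 0 = 0) {t : ℝ} (ht : 0 < t) : cdf' μ X t ∈ Ioo 0 1 :=
  ⟨hF0 ▸ hF self_mem_Ici ht.le ht,
    (hF ht.le (by simp only [mem_Ici]; linarith) (lt_add_one t)).trans_le measureReal_le_one⟩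

lemma exists_pos_cdf'_eq [IsProbabilityMeasure μ] (hX : Measurable X)
    (hF : Continuous (cdf' μ X)) (hF0 : cdf' μ X 0 = 0) {p : ℝ} (hp : p ∈ Ioo 0 1) :
    ∃ t, 0 < t ∧ cdf' μ X t = p := by
  have hlim : Tendsto (cdf' μ X) atTop (𝓝 1) := by
    rw [cdf'_eq_cdf_map hX]
    exact tendsto_cdf_atTop _
  obtain ⟨b, hb⟩ := (hlim.eventually (eventually_gt_nhds hp.2)).exists
  obtain ⟨t, ht⟩ := mem_range_of_exists_le_of_exists_ge hF ⟨0, hF0.trans_le hp.1.le⟩ ⟨b, hb.le⟩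
  refine ⟨t, lt_of_not_ge fun ht0 => ?_, ht⟩
  have := monotone_cdf' (μ := μ) (X := X) ht0
  linarith [hp.1]

lemma quantile_cdf' [IsFiniteMeasure μ] (hF : StrictMonoOn (cdf' μ X) (Ici 0)) {t : ℝ}
    (ht : 0 < t) : quantile μ X (cdf' μ X t) = t := by
  refine IsLeast.csInf_eq ⟨le_refl (cdf' μ X t), fun x hx => le_of_not_gt fun hxt => ?_⟩
  have hlt : cdf' μ X x < cdf' μ X t :=
    (monotone_cdf' (le_max_left x 0)).trans_lt
      (hF (le_max_right x 0) ht.le (max_lt hxt ht))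
  exact hlt.not_ge hx

lemma continuousOn_quantile [IsProbabilityMeasure μ] (hX : Measurable X)
    (hFc : Continuous (cdf' μ X)) (hFs : StrictMonoOn (cdf' μ X) (Ici 0))
    (hF0 : cdf' μ X 0 = 0) : ContinuousOn (quantile μ X) (Ioo 0 1) := by
  have hinv : ∀ p ∈ Ioo (0 : ℝ) 1, ∃ t, 0 < t ∧ cdf' μ X t = p ∧ quantile μ X p = t := by
    intro p hp
    obtain ⟨t, ht, rfl⟩ := exists_pos_cdf'_eq hX hFc hF0 hp
    exact ⟨t, ht, rfl, quantile_cdf' hFs ht⟩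
  have hmono : MonotoneOn (quantile μ X) (Ioo 0 1) := by
    intro p hp p' hp' hpp'
    obtain ⟨t, ht, rfl, hqt⟩ := hinv p hp
    obtain ⟨t', ht', rfl, hqt'⟩ := hinv p' hp'
    rw [hqt, hqt']
    exact (hFs.le_iff_le ht.le ht'.le).1 hpp'
  have himage : Ioi 0 ⊆ quantile μ X '' Ioo 0 1 := fun t ht =>
    ⟨cdf' μ X t, cdf'_mem_Ioo hFs hF0 ht, quantile_cdf' hFs ht⟩
  intro p hp
  obtain ⟨t, ht, -, hqt⟩ := hinv p hp
  refine (continuousAt_of_monotoneOn_of_image_mem_nhds hmono (isOpen_Ioo.mem_nhds hp)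
    (mem_of_superset (isOpen_Ioi.mem_nhds ?_) himage)).continuousWithinAt
  rwa [hqt]

end DistributionFunction

lemma ContinuousOn.eqOn_zero_of_setIntegral_eq_zero {α : Type*} [TopologicalSpace α]
    [MeasurableSpace α] [OpensMeasurableSpace α] {μ : Measure α} [μ.IsOpenPosMeasure]
    {U : Set α} {f : α → ℝ} (hf : ContinuousOn f U) (hU : IsOpen U)
    (hfi : IntegrableOn f U μ) (hf0 : ∀ x ∈ U, 0 ≤ f x) (h : ∫ x in U, f x ∂μ = 0) :
    EqOn f 0 U :=
  μ.eqOn_open_of_ae_eq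
    ((setIntegral_eq_zero_iff_of_nonneg_ae (ae_restrict_of_forall_mem hU.measurableSet hf0)
      hfi).1 h) hU hf continuousOn_const

section ConcentrationCurve

variable {Ω : Type*} {m0 : MeasurableSpace Ω} {μ : Measure Ω} {X : Ω → ℝ}

lemma continuous_setIntegral_le {f : Ω → ℝ} (hX : Measurable X) (hf : Integrable f μ)
    (hatom : ∀ t, μ (X ⁻¹' {t}) = 0) :
    Continuous fun t : ℝ => ∫ ω in {ω | X ω ≤ t}, f ω ∂μ := by
  have hset : ∀ t : ℝ, MeasurableSet {ω | X ω ≤ t} := fun t => hX measurableSet_Iic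
  simp_rw [← integral_indicator (hset _)]
  refine continuous_iff_continuousAt.2 fun t₀ => continuousAt_of_dominated
    (Eventually.of_forall fun t => hf.aestronglyMeasurable.indicator (hset t))
    (Eventually.of_forall fun t => ae_of_all _ fun ω => norm_indicator_le_norm_self f ω)
    hf.norm ?_
  -- away from the null set `{X = t₀}`, the integrand is locally constant in `t` near `t₀`
  filter_upwards [measure_eq_zero_iff_ae_notMem.1 (hatom t₀)] with ω hω
  rcases lt_or_gt_of_ne hω with h | h
  · refine continuousAt_const.congr (f := fun _ => f ω) ?_
    filter_upwards [eventually_gt_nhds h] with t ht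
    exact (indicator_of_mem (show ω ∈ {ω | X ω ≤ t} from ht.le) f).symm
  · refine continuousAt_const.congr (f := fun _ => (0 : ℝ)) ?_
    filter_upwards [eventually_lt_nhds h] with t ht
    exact (indicator_of_notMem (show ω ∉ {ω | X ω ≤ t} from not_le.2 ht) f).symm

lemma CC_mem_Icc {Y : Ω → ℝ} (hY : Integrable Y μ) (hY0 : 0 ≤ᵐ[μ] Y) (p : ℝ) :
    CC μ Y X p ∈ Icc 0 1 :=
  ⟨div_nonneg (integral_nonneg_of_ae (ae_restrict_of_ae hY0)) (integral_nonneg_of_ae hY0),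
    div_le_one_of_le₀ (setIntegral_le_integral hY hY0) (integral_nonneg_of_ae hY0)⟩

lemma continuousOn_CC [IsProbabilityMeasure μ] {Y : Ω → ℝ} (hY : Integrable Y μ)
    (hX : Measurable X) (hFc : Continuous (cdf' μ X)) (hFs : StrictMonoOn (cdf' μ X) (Ici 0))
    (hF0 : cdf' μ X 0 = 0) : ContinuousOn (CC μ Y X) (Ioo 0 1) :=
  ((continuous_setIntegral_le hX hY (measure_preimage_singleton_eq_zero hX hFc)).comp_continuousOn
    (continuousOn_quantile hX hFc hFs hF0)).div_const _

lemma eqOn_CC_LC_of_abc_sq_eq_zero [IsProbabilityMeasure μ] {Y : Ω → ℝ}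
    (hX : Measurable X) (hY : Integrable Y μ) (hXint : Integrable X μ)
    (hY0 : 0 ≤ᵐ[μ] Y) (hX0 : 0 ≤ᵐ[μ] X) (hFc : Continuous (cdf' μ X))
    (hFs : StrictMonoOn (cdf' μ X) (Ici 0)) (hF0 : cdf' μ X 0 = 0)
    (habc2 : ∫ p in (0:ℝ)..1, (CC μ Y X p - LC μ X p) ^ 2 = 0) :
    EqOn (CC μ Y X) (LC μ X) (Ioo 0 1) := by
  have hcont : ContinuousOn (fun p => (CC μ Y X p - LC μ X p) ^ 2) (Ioo 0 1) :=
    ((continuousOn_CC hY hX hFc hFs hF0).sub (continuousOn_CC hXint hX hFc hFs hF0)).pow 2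
  have hle : ∀ p, ‖(CC μ Y X p - LC μ X p) ^ 2‖ ≤ 1 := fun p => by
    obtain ⟨hC0, hC1⟩ := CC_mem_Icc (X := X) hY hY0 p
    obtain ⟨hL0, hL1⟩ : LC μ X p ∈ Icc 0 1 := CC_mem_Icc hXint hX0 p
    rw [Real.norm_of_nonneg (sq_nonneg _)]
    exact (sq_le_one_iff_abs_le_one _).2 (abs_sub_le_iff.2 ⟨by linarith, by linarith⟩)
  have hint : IntegrableOn (fun p => (CC μ Y X p - LC μ X p) ^ 2) (Ioo 0 1) :=
    (integrableOn_const (C := (1 : ℝ)) measure_Ioo_lt_top.ne).mono'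
      (hcont.aestronglyMeasurable measurableSet_Ioo) (ae_of_all _ hle)
  rw [intervalIntegral.integral_of_le zero_le_one, integral_Ioc_eq_integral_Ioo] at habc2
  intro p hp
  simpa [sub_eq_zero] using
    hcont.eqOn_zero_of_setIntegral_eq_zero isOpen_Ioo hint (fun _ _ => sq_nonneg _) habc2 hp

end ConcentrationCurve

section ConditionalExpectation

variable {Ω : Type*} {m0 : MeasurableSpace Ω} {μ : Measure Ω} {X : Ω → ℝ}

lemma setIntegral_preimage_eq_of_forall_setIntegral_le_eq {f g : Ω → ℝ} (hX : Measurable X)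
    (hf : Integrable f μ) (hg : Integrable g μ) (hf0 : 0 ≤ᵐ[μ] f) (hg0 : 0 ≤ᵐ[μ] g)
    (h : ∀ t, ∫ ω in {ω | X ω ≤ t}, f ω ∂μ = ∫ ω in {ω | X ω ≤ t}, g ω ∂μ)
    {A : Set ℝ} (hA : MeasurableSet A) :
    ∫ ω in X ⁻¹' A, f ω ∂μ = ∫ ω in X ⁻¹' A, g ω ∂μ := by
  have hdensity : ∀ {φ : Ω → ℝ}, Integrable φ μ → 0 ≤ᵐ[μ] φ → ∀ {s : Set Ω}, MeasurableSet s →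
      μ.withDensity (fun ω => ENNReal.ofReal (φ ω)) s = ENNReal.ofReal (∫ ω in s, φ ω ∂μ) :=
    fun hφ hφ0 _ hs => by
      rw [withDensity_apply _ hs,
        ofReal_integral_eq_lintegral_ofReal hφ.integrableOn (ae_restrict_of_ae hφ0)]
  have hlaw : (μ.withDensity fun ω => ENNReal.ofReal (f ω)).map X =
      (μ.withDensity fun ω => ENNReal.ofReal (g ω)).map X := by
    have := isFiniteMeasure_withDensity_ofReal hf.2
    refine Measure.ext_of_Iic _ _ fun t => ?_
    rw [Measure.map_apply hX measurableSet_Iic, Measure.map_apply hX measurableSet_Iic,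
      hdensity hf hf0 (hX measurableSet_Iic), hdensity hg hg0 (hX measurableSet_Iic)]
    exact congrArg ENNReal.ofReal (h t)
  have hA' := congrArg (fun ν => ν A) hlaw
  simp only [Measure.map_apply hX hA, hdensity hf hf0 (hX hA), hdensity hg hg0 (hX hA)] at hA'
  exact (ENNReal.ofReal_eq_ofReal_iff (integral_nonneg_of_ae (ae_restrict_of_ae hf0))
    (integral_nonneg_of_ae (ae_restrict_of_ae hg0))).1 hA'

lemma condExp_comap_ae_eq_of_forall_setIntegral_le_eq [IsFiniteMeasure μ] {Y : Ω → ℝ}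
    (hX : Measurable X) (hY : Integrable Y μ) (hXint : Integrable X μ)
    (hY0 : 0 ≤ᵐ[μ] Y) (hX0 : 0 ≤ᵐ[μ] X)
    (h : ∀ t, ∫ ω in {ω | X ω ≤ t}, Y ω ∂μ = ∫ ω in {ω | X ω ≤ t}, X ω ∂μ) :
    μ[Y | MeasurableSpace.comap X Real.measurableSpace] =ᵐ[μ] X := by
  refine (ae_eq_condExp_of_forall_setIntegral_eq hX.comap_le hY
    (fun _ _ _ => hXint.integrableOn) ?_ (comap_measurable X).aestronglyMeasurable).symm
  rintro _ ⟨A, hA, rfl⟩ -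
  exact (setIntegral_preimage_eq_of_forall_setIntegral_le_eq hX hY hXint hY0 hX0 h hA).symm

end ConditionalExpectation

/-- if `ABC²(Y,X) = ∫₀¹ (CC_p − LC_p)² dp = 0` then `X` is
mean-calibrated for `Y`, i.e. `E[Y|X] = X` a.s. -/
theorem mean_calibrated_of_abc_sq_zero
    {Ω : Type*} {m0 : MeasurableSpace Ω} (μ : Measure Ω) [IsProbabilityMeasure μ]
    (Y X : Ω → ℝ) (hX : Measurable X) (hY : Integrable Y μ) (hXint : Integrable X μ)
    (hY0 : 0 ≤ᵐ[μ] Y) (hX0 : 0 ≤ᵐ[μ] X)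
    (hmean : ∫ ω, Y ω ∂μ = ∫ ω, X ω ∂μ) (hpos : 0 < ∫ ω, Y ω ∂μ)
    (hFcont : Continuous (cdf' μ X)) (hFmono : StrictMonoOn (cdf' μ X) (Set.Ici 0))
    (hF0 : cdf' μ X 0 = 0)
    (habc2 : ∫ p in (0:ℝ)..1, (CC μ Y X p - LC μ X p) ^ 2 = 0) :
    μ[Y | MeasurableSpace.comap X Real.measurableSpace] =ᵐ[μ] X := by
  have hCC := eqOn_CC_LC_of_abc_sq_eq_zero hX hY hXint hY0 hX0 hFcont hFmono hF0 habc2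
  refine condExp_comap_ae_eq_of_forall_setIntegral_le_eq hX hY hXint hY0 hX0 fun t => ?_
  rcases le_or_gt t 0 with ht | ht
  · have hnull : μ {ω | X ω ≤ t} = 0 := measure_mono_null (fun ω (hω : X ω ≤ t) => hω.trans ht)
      ((measureReal_eq_zero_iff (μ := μ)).1 hF0)
    simp [Measure.restrict_eq_zero.2 hnull]
  · have hCCt := hCC (cdf'_mem_Ioo hFmono hF0 ht)
    rwa [CC, LC, quantile_cdf' hFmono ht, ← hmean, div_left_inj' hpos.ne'] at hCCt
end

section
/- Let Z be uniform on (0,1), 0 < q < 1/(2π), and set X = Z + q·cos(2πZ) and m(Z) = Z. Then X is strictly increasing in Z with values in (0, 1+q), E[X] = 1/2, and E[(m(Z) − X)·F_X(X)] = E[−q·cos(2πZ)·Z] = 0; hence the ABC statistics vanishes although X ≠ m(Z) (X is not mean-calibrated). -/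
open MeasureTheory ProbabilityTheory Real

open Set

/-! Because `cos` is `1`-Lipschitz and `2πq < 1`, the map `z ↦ z + q cos (2πz)` is strictly
increasing, so `F_X(X) = F_Z(Z) = Z` almost surely and the ABC statistic reduces to
`-q ∫₀¹ z cos (2πz) dz = 0`. Yet `X = Z` a.s. would force the continuous function `q cos (2π·)` to
vanish on all of `(0, 1)`, which fails at `1/2`. -/

theorem strictMono_add_mul_cos_two_pi_mul {q : ℝ} (hq : |q| < 1 / (2 * π)) :
    StrictMono fun z : ℝ => z + q * cos (2 * π * z) := by
  intro a b hab
  have hslope : |q| * (2 * π) < 1 := by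
    rwa [lt_div_iff₀ (by positivity)] at hq
  have hcos : |cos (2 * π * a) - cos (2 * π * b)| ≤ 2 * π * (b - a) := by
    calc |cos (2 * π * a) - cos (2 * π * b)| ≤ |2 * π * a - 2 * π * b| := abs_cos_sub_cos_le _ _
      _ = 2 * π * (b - a) := by
        rw [← mul_sub, abs_mul, abs_of_pos (by positivity), abs_sub_comm, abs_of_pos (by linarith)]
  have hpert : q * (cos (2 * π * a) - cos (2 * π * b)) < b - a := by
    calc q * (cos (2 * π * a) - cos (2 * π * b))
        ≤ |q| * |cos (2 * π * a) - cos (2 * π * b)| := by rw [← abs_mul]; exact le_abs_self _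
      _ ≤ |q| * (2 * π * (b - a)) := by gcongr
      _ = |q| * (2 * π) * (b - a) := by ring
      _ < b - a := by nlinarith [sub_pos.mpr hab]
  simp only
  linarith

theorem integral_cos_two_pi_mul : ∫ x in (0 : ℝ)..1, cos (2 * π * x) = 0 := by
  simp [intervalIntegral.integral_comp_mul_left, integral_cos, pi_ne_zero]

theorem integral_mul_cos_two_pi_mul : ∫ x in (0 : ℝ)..1, x * cos (2 * π * x) = 0 := by
  have hderiv : ∀ x : ℝ, HasDerivAt (fun y => y * sin (2 * π * y) / (2 * π) +
      cos (2 * π * y) / (4 * π ^ 2)) (x * cos (2 * π * x)) x := by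
    intro x
    have hlin : HasDerivAt (fun y : ℝ => 2 * π * y) (2 * π) x := by
      simpa using (hasDerivAt_id' x).const_mul (2 * π)
    refine ((((hasDerivAt_id' x).mul hlin.sin).div_const (2 * π)).add
      (hlin.cos.div_const (4 * π ^ 2))).congr_deriv ?_
    field_simp
    ring
  rw [intervalIntegral.integral_eq_sub_of_hasDerivAt (fun x _ => hderiv x)
    ((by fun_prop : Continuous fun x : ℝ => x * cos (2 * π * x)).intervalIntegrable 0 1)]
  simp

theorem integral_add_mul_cos_two_pi_mul (q : ℝ) :
    ∫ x in (0 : ℝ)..1, x + q * cos (2 * π * x) = 1 / 2 := by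
  rw [intervalIntegral.integral_add intervalIntegral.intervalIntegrable_id
      ((by fun_prop : Continuous fun x : ℝ => q * cos (2 * π * x)).intervalIntegrable 0 1),
    integral_id, intervalIntegral.integral_const_mul, integral_cos_two_pi_mul]
  norm_num

section UniformPushforward

variable {Ω : Type*} {m0 : MeasurableSpace Ω} {μ : Measure Ω} {Z : Ω → ℝ} {a b : ℝ}

theorem integral_comp_eq_intervalIntegral_of_map_eq_restrict_Ioo (hZ : AEMeasurable Z μ)
    (hmap : μ.map Z = volume.restrict (Ioo a b)) (hab : a ≤ b) {g : ℝ → ℝ}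
    (hg : Measurable g) : ∫ ω, g (Z ω) ∂μ = ∫ x in a..b, g x := by
  rw [← integral_map hZ hg.aestronglyMeasurable, hmap, ← integral_Ioc_eq_integral_Ioo,
    intervalIntegral.integral_of_le hab]

theorem ae_mem_Ioo_of_map_eq_restrict_Ioo (hZ : AEMeasurable Z μ)
    (hmap : μ.map Z = volume.restrict (Ioo a b)) : ∀ᵐ ω ∂μ, Z ω ∈ Ioo a b := by
  refine (ae_map_iff hZ measurableSet_Ioo).mp ?_
  rw [hmap]
  exact ae_restrict_mem measurableSet_Ioo

theorem eqOn_Ioo_of_comp_ae_eq (hZ : AEMeasurable Z μ)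
    (hmap : μ.map Z = volume.restrict (Ioo a b)) {g h : ℝ → ℝ} (hg : Continuous g)
    (hh : Continuous h) (hgh : (fun ω => g (Z ω)) =ᵐ[μ] fun ω => h (Z ω)) :
    EqOn g h (Ioo a b) := by
  have hmapeq : g =ᵐ[μ.map Z] h :=
    (ae_map_iff hZ (measurableSet_eq_fun hg.measurable hh.measurable)).mpr hgh
  rw [hmap] at hmapeq
  exact Measure.eqOn_open_of_ae_eq hmapeq isOpen_Ioo hg.continuousOn hh.continuousOn

theorem cdf'_eq_of_map_eq_restrict_Ioo_zero_one (hZ : AEMeasurable Z μ)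
    (hmap : μ.map Z = volume.restrict (Ioo 0 1)) {t : ℝ} (ht : t ∈ Ioo 0 1) :
    cdf' μ Z t = t := by
  have hIic : Iic t ∩ Ioo 0 1 = Ioc 0 t := by
    ext x
    simp only [mem_inter_iff, mem_Iic, mem_Ioo, mem_Ioc]
    constructor
    · rintro ⟨hxt, hx0, -⟩; exact ⟨hx0, hxt⟩
    · rintro ⟨hx0, hxt⟩; exact ⟨hxt, hx0, hxt.trans_lt ht.2⟩
  simp only [cdf']
  rw [show {ω | Z ω ≤ t} = Z ⁻¹' Iic t from rfl,
    ← Measure.map_apply_of_aemeasurable hZ measurableSet_Iic, hmap,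
    Measure.restrict_apply measurableSet_Iic, hIic, volume_Ioc, sub_zero,
    ENNReal.toReal_ofReal ht.1.le]

end UniformPushforward

theorem cdf'_comp_of_strictMono {Ω : Type*} [MeasurableSpace Ω] (μ : Measure Ω) (Z : Ω → ℝ)
    {f : ℝ → ℝ} (hf : StrictMono f) (t : ℝ) :
    cdf' μ (fun ω => f (Z ω)) (f t) = cdf' μ Z t := by
  simp only [cdf', hf.le_iff_le]

theorem abc_zero_without_calibration_example_general
    {Ω : Type*} {m0 : MeasurableSpace Ω} (μ : Measure Ω)
    (Z X : Ω → ℝ) (hZ : Measurable Z)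
    (hmap : μ.map Z = volume.restrict (Set.Ioo (0:ℝ) 1))
    (q : ℝ) (hq0 : 0 < q) (hq1 : q < 1 / (2 * π))
    (hXdef : ∀ ω, X ω = Z ω + q * Real.cos (2 * π * Z ω)) :
    StrictMonoOn (fun z : ℝ => z + q * Real.cos (2 * π * z)) (Set.Ioo 0 1)
    ∧ (∀ z ∈ Set.Ioo (0:ℝ) 1,
        z + q * Real.cos (2 * π * z) ∈ Set.Ioo (0:ℝ) (1 + q))
    ∧ (∫ ω, X ω ∂μ) = 1 / 2
    ∧ (∫ ω, (Z ω - X ω) * cdf' μ X (X ω) ∂μ) = 0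
    ∧ (∫ ω, (-q * Real.cos (2 * π * Z ω)) * Z ω ∂μ) = 0
    ∧ ¬ (X =ᵐ[μ] Z) := by
  set f : ℝ → ℝ := fun z => z + q * cos (2 * π * z) with hf_def
  have hf : StrictMono f := strictMono_add_mul_cos_two_pi_mul (by rwa [abs_of_pos hq0])
  obtain rfl : X = fun ω => f (Z ω) := funext hXdef
  have hE : ∀ g : ℝ → ℝ, Continuous g → ∫ ω, g (Z ω) ∂μ = ∫ x in (0 : ℝ)..1, g x :=
    fun g hg => integral_comp_eq_intervalIntegral_of_map_eq_restrict_Ioo hZ.aemeasurable hmap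
      zero_le_one hg.measurable
  have hcov : ∫ ω, (-q * cos (2 * π * Z ω)) * Z ω ∂μ = 0 := by
    rw [hE (fun x => (-q * cos (2 * π * x)) * x) (by fun_prop)]
    simp_rw [mul_comm (-q * _), mul_comm (-q), ← mul_assoc]
    rw [intervalIntegral.integral_mul_const, integral_mul_cos_two_pi_mul, zero_mul]
  refine ⟨hf.strictMonoOn _, fun z hz => ?_, ?_, ?_, hcov, ?_⟩
  · have hfz := hf.mapsTo_Ioo hz
    simp only [hf_def, mul_zero, cos_zero, mul_one, zero_add, cos_two_pi] at hfz
    exact ⟨hq0.trans hfz.1, hfz.2⟩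
  · rw [hE f (by fun_prop), hf_def, integral_add_mul_cos_two_pi_mul]
  · rw [← hcov]
    refine integral_congr_ae ?_
    filter_upwards [ae_mem_Ioo_of_map_eq_restrict_Ioo hZ.aemeasurable hmap] with ω hω
    rw [cdf'_comp_of_strictMono μ Z hf,
      cdf'_eq_of_map_eq_restrict_Ioo_zero_one hZ.aemeasurable hmap hω, hf_def]
    ring
  · intro hcal
    have hfid := eqOn_Ioo_of_comp_ae_eq hZ.aemeasurable hmap (by fun_prop) continuous_id hcal
      (show (1 / 2 : ℝ) ∈ Ioo 0 1 by norm_num)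
    simp only [hf_def, id] at hfid
    rw [show 2 * π * (1 / 2) = π by ring, cos_pi] at hfid
    linarith

/-- with `Z ~ Unif(0,1)`, `0 < q < 1/(2π)` and
`X = Z + q·cos(2πZ)`, the map is strictly increasing with values in `(0, 1+q)`,
`E[X] = 1/2`, the ABC statistics vanishes
(`E[(Z − X)·F_X(X)] = E[−q·cos(2πZ)·Z] = 0`), yet `X` is not mean-calibrated
(`X ≠ Z` a.s.). -/
theorem abc_zero_without_calibration_example
    {Ω : Type*} {m0 : MeasurableSpace Ω} (μ : Measure Ω) [IsProbabilityMeasure μ]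
    (Z X : Ω → ℝ) (hZ : Measurable Z)
    (hmap : μ.map Z = volume.restrict (Set.Ioo (0:ℝ) 1))
    (q : ℝ) (hq0 : 0 < q) (hq1 : q < 1 / (2 * π))
    (hXdef : ∀ ω, X ω = Z ω + q * Real.cos (2 * π * Z ω)) :
    StrictMonoOn (fun z : ℝ => z + q * Real.cos (2 * π * z)) (Set.Ioo 0 1)
    ∧ (∀ z ∈ Set.Ioo (0:ℝ) 1,
        z + q * Real.cos (2 * π * z) ∈ Set.Ioo (0:ℝ) (1 + q))
    ∧ (∫ ω, X ω ∂μ) = 1 / 2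
    ∧ (∫ ω, (Z ω - X ω) * cdf' μ X (X ω) ∂μ) = 0
    ∧ (∫ ω, (-q * Real.cos (2 * π * Z ω)) * Z ω ∂μ) = 0
    ∧ ¬ (X =ᵐ[μ] Z) :=
  abc_zero_without_calibration_example_general (m0 := m0) μ Z X hZ hmap q hq0 hq1 hXdef
end

section
/- Let Y be Bernoulli with success probability π₁ = E[Y] ∈ (0,1), π₀ = 1 − π₁, and let X be a mean-calibrated predictor (E[Y|X]=X a.s.) supported on (0,1) with continuous cdf F_X. Then with H = F_X, the expected loss S = ∫₀^∞ E[L_θ(Y,X)] dF_X(θ) satisfies S = −π₁·Gini(X) + π₀π₁, where Gini(X) = E[|X−X'|]/(2E[X]) and X' is an independent copy of X. -/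
/-!
Calibration makes the correction term `1{X > θ}(Y - X)` vanish in expectation at every
threshold, so `E[L_θ(Y, X)] = E[(Y - θ)⁺] - E[(X - θ)⁺]`. For Bernoulli `Y` the first term is
`π₁(1 - θ)` on `(0, 1)`, which integrates against `F_X` to `π₁(1 - E[X]) = π₁π₀`. Integrating the
second against `F_X` gives `E[(X - X')⁺]`, which by the exchangeability of `(X, X')` is
`E|X - X'| / 2 = π₁ Gini(X)`.
-/

open MeasureTheory ProbabilityTheory

/-- The elementary Bregman loss. -/
noncomputable def elemLoss (θ y x : ℝ) : ℝ :=
  max (y - θ) 0 - max (x - θ) 0 - (if θ < x then y - x else 0)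

/-- `E[(Y - θ)⁺]` for `Y` Bernoulli with success probability `p`. -/
noncomputable def bernoulliHinge (p θ : ℝ) : ℝ :=
  p * max (1 - θ) 0 + (1 - p) * max (-θ) 0

lemma continuous_bernoulliHinge (p : ℝ) : Continuous (bernoulliHinge p) := by
  unfold bernoulliHinge; fun_prop

lemma bernoulliHinge_of_mem_Icc (p : ℝ) {θ : ℝ} (hθ : θ ∈ Set.Icc (0 : ℝ) 1) :
    bernoulliHinge p θ = p * (1 - θ) := by
  rw [bernoulliHinge, max_eq_left (by linarith [hθ.2]), max_eq_right (by linarith [hθ.1])]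
  ring

lemma max_sub_zero_of_eq_zero_or_eq_one {y : ℝ} (hy : y = 0 ∨ y = 1) (θ : ℝ) :
    max (y - θ) 0 = y * max (1 - θ) 0 + (1 - y) * max (-θ) 0 := by
  rcases hy with rfl | rfl <;> simp

lemma max_sub_zero_add_max_sub_zero (a b : ℝ) : max (a - b) 0 + max (b - a) 0 = |a - b| := by
  rw [← posPart_add_negPart, negPart_def, neg_sub]; rfl

section Bernoulli

variable {Ω : Type*} {m0 : MeasurableSpace Ω} {μ : Measure Ω} [IsProbabilityMeasure μ]

lemma integral_max_sub_zero_of_bernoulli {Y : Ω → ℝ} (hY : Integrable Y μ)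
    (hYber : ∀ᵐ ω ∂μ, Y ω = 0 ∨ Y ω = 1) (θ : ℝ) :
    ∫ ω, max (Y ω - θ) 0 ∂μ = bernoulliHinge (∫ ω, Y ω ∂μ) θ := by
  have hae : (fun ω => max (Y ω - θ) 0)
      =ᵐ[μ] fun ω => Y ω * (max (1 - θ) 0 - max (-θ) 0) + max (-θ) 0 := by
    filter_upwards [hYber] with ω hω
    rw [max_sub_zero_of_eq_zero_or_eq_one hω]; ring
  rw [integral_congr_ae hae, integral_add (hY.mul_const _) (integrable_const _),
    integral_mul_const, integral_const, probReal_univ, one_smul, bernoulliHinge]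
  ring

variable {X : Ω → ℝ}

lemma integrable_of_ae_mem_Icc (hX : Measurable X)
    (hXunit : ∀ᵐ ω ∂μ, X ω ∈ Set.Icc (0 : ℝ) 1) : Integrable X μ := by
  refine .of_bound hX.aestronglyMeasurable 1 ?_
  filter_upwards [hXunit] with ω hω
  rw [Real.norm_eq_abs, abs_of_nonneg hω.1]
  exact hω.2

omit [IsProbabilityMeasure μ] in
lemma bernoulliHinge_comp_ae_eq (hXunit : ∀ᵐ ω ∂μ, X ω ∈ Set.Icc (0 : ℝ) 1) (p : ℝ) :
    (fun ω => bernoulliHinge p (X ω)) =ᵐ[μ] fun ω => p * (1 - X ω) := by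
  filter_upwards [hXunit] with ω hω using bernoulliHinge_of_mem_Icc p hω

lemma integrable_bernoulliHinge_map (hX : Measurable X)
    (hXunit : ∀ᵐ ω ∂μ, X ω ∈ Set.Icc (0 : ℝ) 1) (p : ℝ) :
    Integrable (bernoulliHinge p) (μ.map X) := by
  rw [integrable_map_measure (continuous_bernoulliHinge p).aestronglyMeasurable hX.aemeasurable]
  exact (((integrable_const 1).sub (integrable_of_ae_mem_Icc hX hXunit)).const_mul p).congr
    (bernoulliHinge_comp_ae_eq hXunit p).symm

lemma integral_bernoulliHinge_map (hX : Measurable X)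
    (hXunit : ∀ᵐ ω ∂μ, X ω ∈ Set.Icc (0 : ℝ) 1) (p : ℝ) :
    ∫ θ, bernoulliHinge p θ ∂(μ.map X) = p * (1 - ∫ ω, X ω ∂μ) := by
  rw [integral_map hX.aemeasurable (continuous_bernoulliHinge p).aestronglyMeasurable,
    integral_congr_ae (bernoulliHinge_comp_ae_eq hXunit p), integral_const_mul,
    integral_sub (integrable_const 1) (integrable_of_ae_mem_Icc hX hXunit), integral_const,
    probReal_univ, one_smul]

end Bernoulli

section Calibration

variable {Ω : Type*} {m0 : MeasurableSpace Ω} {μ : Measure Ω} [IsFiniteMeasure μ]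
  {X Y : Ω → ℝ}

lemma setIntegral_preimage_eq_of_condExp_comap_eq (hX : Measurable X) (hY : Integrable Y μ)
    (hcal : μ[Y | MeasurableSpace.comap X Real.measurableSpace] =ᵐ[μ] X)
    {s : Set ℝ} (hs : MeasurableSet s) :
    ∫ ω in X ⁻¹' s, Y ω ∂μ = ∫ ω in X ⁻¹' s, X ω ∂μ := by
  rw [← setIntegral_condExp hX.comap_le hY ⟨s, hs, rfl⟩]
  exact integral_congr_ae (ae_restrict_of_ae hcal)

lemma integral_elemLoss_of_condExp_comap_eq (hX : Measurable X) (hXint : Integrable X μ)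
    (hY : Integrable Y μ) (hcal : μ[Y | MeasurableSpace.comap X Real.measurableSpace] =ᵐ[μ] X)
    (θ : ℝ) :
    ∫ ω, elemLoss θ (Y ω) (X ω) ∂μ = ∫ ω, max (Y ω - θ) 0 ∂μ - ∫ ω, max (X ω - θ) 0 ∂μ := by
  have hs : MeasurableSet (X ⁻¹' Set.Ioi θ) := hX measurableSet_Ioi
  have hind : (fun ω => if θ < X ω then Y ω - X ω else 0)
      = (X ⁻¹' Set.Ioi θ).indicator (fun ω => Y ω - X ω) := funext fun ω => by
    by_cases h : θ < X ω <;> simp [h]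
  have hgap : ∫ ω, (if θ < X ω then Y ω - X ω else 0) ∂μ = 0 := by
    rw [hind, integral_indicator hs, integral_sub hY.integrableOn hXint.integrableOn,
      setIntegral_preimage_eq_of_condExp_comap_eq hX hY hcal measurableSet_Ioi, sub_self]
  have hgap_int : Integrable (fun ω => if θ < X ω then Y ω - X ω else 0) μ := by
    rw [hind]; exact (hY.sub hXint).indicator hs
  have hYθ : Integrable (fun ω => max (Y ω - θ) 0) μ :=
    (hY.sub (integrable_const θ)).pos_part
  have hXθ : Integrable (fun ω => max (X ω - θ) 0) μ :=
    (hXint.sub (integrable_const θ)).pos_part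
  have hdiff : Integrable (fun ω => max (Y ω - θ) 0 - max (X ω - θ) 0) μ := hYθ.sub hXθ
  simp only [elemLoss]
  rw [integral_sub hdiff hgap_int, integral_sub hYθ hXθ, hgap, sub_zero]

end Calibration

section MeanDifference

variable {ν : Measure ℝ} [SFinite ν]

omit [SFinite ν] in
lemma integrable_prod_max_sub_zero
    (h : Integrable (fun p : ℝ × ℝ => |p.1 - p.2|) (ν.prod ν)) :
    Integrable (fun p : ℝ × ℝ => max (p.1 - p.2) 0) (ν.prod ν) :=
  h.mono' (by fun_prop) <| ae_of_all _ fun p => by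
    rw [Real.norm_eq_abs, abs_of_nonneg (le_max_right _ _)]
    exact max_le (le_abs_self _) (abs_nonneg _)

/-- By symmetry of `ν.prod ν`, the positive and negative parts of `x - y` have the same mean. -/
lemma integral_prod_max_sub_zero_eq_half
    (h : Integrable (fun p : ℝ × ℝ => |p.1 - p.2|) (ν.prod ν)) :
    ∫ p, max (p.1 - p.2) 0 ∂(ν.prod ν) = (∫ p, |p.1 - p.2| ∂(ν.prod ν)) / 2 := by
  have hφ := integrable_prod_max_sub_zero h
  have hswap : ∫ p : ℝ × ℝ, max (p.2 - p.1) 0 ∂(ν.prod ν)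
      = ∫ p, max (p.1 - p.2) 0 ∂(ν.prod ν) :=
    integral_prod_swap (fun p : ℝ × ℝ => max (p.1 - p.2) 0)
  have hsum := integral_add hφ hφ.swap
  simp only [Function.comp_def, Prod.fst_swap, Prod.snd_swap, max_sub_zero_add_max_sub_zero,
    hswap] at hsum
  linarith

lemma integrable_integral_max_sub_zero
    (h : Integrable (fun p : ℝ × ℝ => |p.1 - p.2|) (ν.prod ν)) :
    Integrable (fun θ => ∫ x, max (x - θ) 0 ∂ν) ν :=
  (integrable_prod_max_sub_zero h).integral_prod_right

lemma integral_integral_max_sub_zero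
    (h : Integrable (fun p : ℝ × ℝ => |p.1 - p.2|) (ν.prod ν)) :
    ∫ θ, ∫ x, max (x - θ) 0 ∂ν ∂ν = (∫ p, |p.1 - p.2| ∂(ν.prod ν)) / 2 := by
  rw [← integral_prod_symm _ (integrable_prod_max_sub_zero h),
    integral_prod_max_sub_zero_eq_half h]

end MeanDifference

lemma map_prodMk_eq_map_prod_map_of_identDistrib {Ω : Type*} {m0 : MeasurableSpace Ω}
    {μ : Measure Ω} [IsFiniteMeasure μ] {X X' : Ω → ℝ} (hX : Measurable X)
    (hX' : Measurable X') (hindep : IndepFun X X' μ) (hcopy : IdentDistrib X' X μ μ) :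
    μ.map (fun ω => (X ω, X' ω)) = (μ.map X).prod (μ.map X) := by
  rw [(indepFun_iff_map_prod_eq_prod_map_map hX.aemeasurable hX'.aemeasurable).mp hindep,
    hcopy.map_eq]

theorem bernoulli_score_gini_general
    {Ω : Type*} {m0 : MeasurableSpace Ω} (μ : Measure Ω) [IsProbabilityMeasure μ]
    (Y X X' : Ω → ℝ) (hX : Measurable X) (hX' : Measurable X')
    (hY : Integrable Y μ)
    (hYber : ∀ᵐ ω ∂μ, Y ω = 0 ∨ Y ω = 1)
    (hπ₁pos : 0 < ∫ ω, Y ω ∂μ)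
    (hXrange : ∀ᵐ ω ∂μ, X ω ∈ Set.Ioo (0:ℝ) 1)
    (hcal : μ[Y | MeasurableSpace.comap X Real.measurableSpace] =ᵐ[μ] X)
    (hmean : ∫ ω, X ω ∂μ = ∫ ω, Y ω ∂μ)
    (hcopy : IdentDistrib X' X μ μ) (hindep : IndepFun X X' μ)
    (hintabs : Integrable (fun ω => |X ω - X' ω|) μ) :
    ∫ θ, (∫ ω, elemLoss θ (Y ω) (X ω) ∂μ) ∂(μ.map X)
      = -(∫ ω, Y ω ∂μ) * ((∫ ω, |X ω - X' ω| ∂μ) / (2 * ∫ ω, X ω ∂μ))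
        + (1 - ∫ ω, Y ω ∂μ) * (∫ ω, Y ω ∂μ) := by
  set ν := μ.map X
  have hπ₁ : (∫ ω, Y ω ∂μ) ≠ 0 := hπ₁pos.ne'
  have hXunit : ∀ᵐ ω ∂μ, X ω ∈ Set.Icc (0 : ℝ) 1 :=
    hXrange.mono fun _ hω => Set.Ioo_subset_Icc_self hω
  have hpair : μ.map (fun ω => (X ω, X' ω)) = ν.prod ν :=
    map_prodMk_eq_map_prod_map_of_identDistrib hX hX' hindep hcopy
  have habs : Integrable (fun p : ℝ × ℝ => |p.1 - p.2|) (ν.prod ν) := by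
    rw [← hpair, integrable_map_measure (by fun_prop) (hX.prodMk hX').aemeasurable]
    exact hintabs
  have hloss : ∀ θ, ∫ ω, elemLoss θ (Y ω) (X ω) ∂μ
      = bernoulliHinge (∫ ω, Y ω ∂μ) θ - ∫ x, max (x - θ) 0 ∂ν := fun θ => by
    rw [integral_elemLoss_of_condExp_comap_eq hX (integrable_of_ae_mem_Icc hX hXunit) hY hcal,
      integral_max_sub_zero_of_bernoulli hY hYber, integral_map hX.aemeasurable (by fun_prop)]
  simp_rw [hloss]
  rw [integral_sub (integrable_bernoulliHinge_map hX hXunit _)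
      (integrable_integral_max_sub_zero habs), integral_bernoulliHinge_map hX hXunit,
    integral_integral_max_sub_zero habs, ← hpair,
    integral_map (hX.prodMk hX').aemeasurable (by fun_prop), hmean]
  field_simp
  ring

/-- for a Bernoulli response `Y` with success probability
`π₁ = E[Y] ∈ (0,1)` and a mean-calibrated predictor `X` supported on `(0,1)` with
continuous cdf, the Bregman score with `H = F_X` satisfies
`S = −π₁·Gini(X) + π₀·π₁` where `Gini(X) = E[|X−X'|]/(2E[X])`. -/
theorem bernoulli_score_gini
    {Ω : Type*} {m0 : MeasurableSpace Ω} (μ : Measure Ω) [IsProbabilityMeasure μ]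
    (Y X X' : Ω → ℝ) (hX : Measurable X) (hX' : Measurable X')
    (hY : Integrable Y μ)
    (hYber : ∀ᵐ ω ∂μ, Y ω = 0 ∨ Y ω = 1)
    (hπ₁pos : 0 < ∫ ω, Y ω ∂μ) (hπ₁lt : (∫ ω, Y ω ∂μ) < 1)
    (hXrange : ∀ᵐ ω ∂μ, X ω ∈ Set.Ioo (0:ℝ) 1)
    (hcal : μ[Y | MeasurableSpace.comap X Real.measurableSpace] =ᵐ[μ] X)
    (hmean : ∫ ω, X ω ∂μ = ∫ ω, Y ω ∂μ)
    (hFcont : Continuous (cdf' μ X))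
    (hcopy : IdentDistrib X' X μ μ) (hindep : IndepFun X X' μ)
    (hintabs : Integrable (fun ω => |X ω - X' ω|) μ)
    (hintM : Integrable (fun θ => ∫ ω, elemLoss θ (Y ω) (X ω) ∂μ) (μ.map X)) :
    ∫ θ, (∫ ω, elemLoss θ (Y ω) (X ω) ∂μ) ∂(μ.map X)
      = -(∫ ω, Y ω ∂μ) * ((∫ ω, |X ω - X' ω| ∂μ) / (2 * ∫ ω, X ω ∂μ))
        + (1 - ∫ ω, Y ω ∂μ) * (∫ ω, Y ω ∂μ) :=
  bernoulli_score_gini_general (m0 := m0) μ Y X X' hX hX' hY hYber hπ₁pos hXrange hcal hmean hcopy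
    hindep hintabs
end

section
/- Let X be a nonnegative mean-calibrated predictor of Y with E[X]=E[Y]>0, and let X' be an independent copy of X. Then with H = F_X (assumed continuous), the Bregman score S = ∫₀^∞ E[(Y−θ)⁺ − (X−θ)⁺] dF_X(θ) satisfies E[Y]·Gini(X) = E[(Y−X')⁺] − S, where Gini(X) = E[|X−X''|]/(2E[X]) with X'' an independent copy of X, and X' is independent of (Y,X). -/
open MeasureTheory ProbabilityTheory

/-!
With `π_Z(θ) = E[(Z - θ)⁺]` the stop-loss transform of `Z`, independence and Fubini give
`E[(Y - X')⁺] = ∫ π_Y dF_X` and `E[(X - X'')⁺] = ∫ π_X dF_X`, and since `(X, X'')` and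
`(X'', X)` have the same law, `E|X - X''| = 2 E[(X - X'')⁺]`. So the Bregman score is
`S = ∫ π_Y dF_X - ∫ π_X dF_X = E[(Y - X')⁺] - E|X - X''| / 2`, and
`E|X - X''| / 2 = E[Y] · Gini(X)` because `E[X] = E[Y] ≠ 0`.
-/

namespace ProbabilityTheory

section IndepIntegral

variable {Ω α β E : Type*} {mΩ : MeasurableSpace Ω} {mα : MeasurableSpace α}
  {mβ : MeasurableSpace β} [NormedAddCommGroup E] {μ : Measure Ω}
  {U : Ω → α} {V : Ω → β} {g : α × β → E}

variable [NormedSpace ℝ E] in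
lemma integral_map_comp_prodMk_right (hU : AEMeasurable U μ) (hg : StronglyMeasurable g)
    (v : β) : ∫ u, g (u, v) ∂(μ.map U) = ∫ ω, g (U ω, v) ∂μ :=
  integral_map hU (hg.comp_measurable measurable_prodMk_right).aestronglyMeasurable

variable [IsFiniteMeasure μ]

lemma IndepFun.integrable_comp_iff_integrable_prod_map (hUV : IndepFun U V μ)
    (hU : AEMeasurable U μ) (hV : AEMeasurable V μ) (hg : StronglyMeasurable g) :
    Integrable (fun ω => g (U ω, V ω)) μ ↔ Integrable g ((μ.map U).prod (μ.map V)) := by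
  rw [← hUV.map_prod_eq_prod_map_map hU hV]
  exact (integrable_map_measure hg.aestronglyMeasurable (hU.prodMk hV)).symm

variable [NormedSpace ℝ E]

lemma IndepFun.integrable_integral_comp (hUV : IndepFun U V μ) (hU : AEMeasurable U μ)
    (hV : AEMeasurable V μ) (hg : StronglyMeasurable g)
    (hint : Integrable (fun ω => g (U ω, V ω)) μ) :
    Integrable (fun v => ∫ ω, g (U ω, v) ∂μ) (μ.map V) := by
  simpa only [integral_map_comp_prodMk_right hU hg] using
    ((hUV.integrable_comp_iff_integrable_prod_map hU hV hg).1 hint).integral_prod_right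

lemma IndepFun.integral_comp_eq_integral_integral (hUV : IndepFun U V μ)
    (hU : AEMeasurable U μ) (hV : AEMeasurable V μ) (hg : StronglyMeasurable g)
    (hint : Integrable (fun ω => g (U ω, V ω)) μ) :
    ∫ ω, g (U ω, V ω) ∂μ = ∫ v, ∫ ω, g (U ω, v) ∂μ ∂(μ.map V) := by
  rw [← integral_map (hU.prodMk hV) hg.aestronglyMeasurable,
    hUV.map_prod_eq_prod_map_map hU hV,
    integral_prod_symm g ((hUV.integrable_comp_iff_integrable_prod_map hU hV hg).1 hint)]
  simp only [integral_map_comp_prodMk_right hU hg]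

end IndepIntegral

section StopLoss

variable {Ω Ω' : Type*} {mΩ : MeasurableSpace Ω} {mΩ' : MeasurableSpace Ω'}
  {μ : Measure Ω} {μ' : Measure Ω'} {Z W : Ω → ℝ}

noncomputable def stopLoss (μ : Measure Ω) (Z : Ω → ℝ) (θ : ℝ) : ℝ :=
  ∫ ω, max (Z ω - θ) 0 ∂μ

lemma IdentDistrib.stopLoss_eq {Z' : Ω' → ℝ} (h : IdentDistrib Z Z' μ μ') :
    stopLoss μ Z = stopLoss μ' Z' :=
  funext fun θ => (h.comp (by fun_prop : Measurable fun z : ℝ => max (z - θ) 0)).integral_eq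

lemma _root_.MeasureTheory.Integrable.max_sub_zero_of_abs_sub (hZ : AEMeasurable Z μ)
    (hW : AEMeasurable W μ) (hint : Integrable (fun ω => |Z ω - W ω|) μ) :
    Integrable (fun ω => max (Z ω - W ω) 0) μ := by
  refine hint.mono ((hZ.sub hW).max aemeasurable_const).aestronglyMeasurable
    (ae_of_all _ fun ω => ?_)
  simp only [Real.norm_eq_abs, abs_abs, abs_of_nonneg (le_max_right _ (0 : ℝ))]
  exact max_le (le_abs_self _) (abs_nonneg _)

lemma integral_abs_sub_eq_integral_max_sub_add_integral_max_sub (hZ : AEMeasurable Z μ)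
    (hW : AEMeasurable W μ) (hint : Integrable (fun ω => |Z ω - W ω|) μ) :
    ∫ ω, |Z ω - W ω| ∂μ = ∫ ω, max (Z ω - W ω) 0 ∂μ + ∫ ω, max (W ω - Z ω) 0 ∂μ := by
  have hint' : Integrable (fun ω => |W ω - Z ω|) μ := by simpa only [abs_sub_comm] using hint
  rw [← integral_add (hint.max_sub_zero_of_abs_sub hZ hW)
    (hint'.max_sub_zero_of_abs_sub hW hZ)]
  refine integral_congr_ae (ae_of_all _ fun ω => ?_)
  simp only [← max_zero_add_max_neg_zero_eq_abs_self (Z ω - W ω), neg_sub]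

variable [IsFiniteMeasure μ]

lemma IndepFun.integrable_stopLoss (hZW : IndepFun Z W μ) (hZ : AEMeasurable Z μ)
    (hW : AEMeasurable W μ) (hint : Integrable (fun ω => max (Z ω - W ω) 0) μ) :
    Integrable (stopLoss μ Z) (μ.map W) :=
  hZW.integrable_integral_comp (g := fun p : ℝ × ℝ => max (p.1 - p.2) 0) hZ hW
    (by fun_prop : Continuous _).stronglyMeasurable hint

lemma IndepFun.integral_max_sub_eq_integral_stopLoss (hZW : IndepFun Z W μ)
    (hZ : AEMeasurable Z μ) (hW : AEMeasurable W μ)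
    (hint : Integrable (fun ω => max (Z ω - W ω) 0) μ) :
    ∫ ω, max (Z ω - W ω) 0 ∂μ = ∫ θ, stopLoss μ Z θ ∂(μ.map W) :=
  hZW.integral_comp_eq_integral_integral (g := fun p : ℝ × ℝ => max (p.1 - p.2) 0) hZ hW
    (by fun_prop : Continuous _).stronglyMeasurable hint

lemma IndepFun.integral_abs_sub_eq_two_mul_integral_stopLoss (hZW : IndepFun Z W μ)
    (hid : IdentDistrib W Z μ μ) (hZ : AEMeasurable Z μ)
    (hint : Integrable (fun ω => |Z ω - W ω|) μ) :
    ∫ ω, |Z ω - W ω| ∂μ = 2 * ∫ θ, stopLoss μ Z θ ∂(μ.map Z) := by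
  have hW := hid.aemeasurable_fst
  have hint' : Integrable (fun ω => |W ω - Z ω|) μ := by simpa only [abs_sub_comm] using hint
  rw [integral_abs_sub_eq_integral_max_sub_add_integral_max_sub hZ hW hint,
    hZW.integral_max_sub_eq_integral_stopLoss hZ hW (hint.max_sub_zero_of_abs_sub hZ hW),
    hZW.symm.integral_max_sub_eq_integral_stopLoss hW hZ (hint'.max_sub_zero_of_abs_sub hW hZ),
    hid.map_eq, hid.stopLoss_eq]
  ring

end StopLoss

end ProbabilityTheory

theorem gini_bregman_representation_general
    {Ω : Type*} {m0 : MeasurableSpace Ω} (μ : Measure Ω) [IsProbabilityMeasure μ]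
    (Y X X' X'' : Ω → ℝ)
    (hY : Integrable Y μ) (hXint : Integrable X μ)
    (hmean : ∫ ω, X ω ∂μ = ∫ ω, Y ω ∂μ) (hpos : 0 < ∫ ω, Y ω ∂μ)
    (hid' : IdentDistrib X' X μ μ) (hid'' : IdentDistrib X'' X μ μ)
    (hindep' : IndepFun (fun ω => (Y ω, X ω)) X' μ)
    (hindep'' : IndepFun X X'' μ)
    (hintabs : Integrable (fun ω => |X ω - X'' ω|) μ)
    (hintpos : Integrable (fun ω => max (Y ω - X' ω) 0) μ) :
    (∫ ω, Y ω ∂μ) * ((∫ ω, |X ω - X'' ω| ∂μ) / (2 * ∫ ω, X ω ∂μ))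
      = (∫ ω, max (Y ω - X' ω) 0 ∂μ)
        - ∫ θ, (∫ ω, (max (Y ω - θ) 0 - max (X ω - θ) 0) ∂μ) ∂(μ.map X) := by
  have hX' : AEMeasurable X' μ := hid'.aemeasurable_fst
  have hYX' : IndepFun Y X' μ := hindep'.comp measurable_fst measurable_id
  have hintY : Integrable (stopLoss μ Y) (μ.map X) :=
    hid'.map_eq ▸ hYX'.integrable_stopLoss hY.aemeasurable hX' hintpos
  have hintX : Integrable (stopLoss μ X) (μ.map X) :=
    hid''.map_eq ▸ hindep''.integrable_stopLoss hXint.aemeasurable hid''.aemeasurable_fst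
      (hintabs.max_sub_zero_of_abs_sub hXint.aemeasurable hid''.aemeasurable_fst)
  have hscore : ∫ θ, (∫ ω, (max (Y ω - θ) 0 - max (X ω - θ) 0) ∂μ) ∂(μ.map X)
      = ∫ θ, stopLoss μ Y θ ∂(μ.map X) - ∫ θ, stopLoss μ X θ ∂(μ.map X) := by
    rw [← integral_sub hintY hintX]
    congr with θ
    exact integral_sub (hY.sub (integrable_const θ)).pos_part
      (hXint.sub (integrable_const θ)).pos_part
  rw [hscore, hYX'.integral_max_sub_eq_integral_stopLoss hY.aemeasurable hX' hintpos,
    hid'.map_eq, hindep''.integral_abs_sub_eq_two_mul_integral_stopLoss hid''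
      hXint.aemeasurable hintabs, hmean]
  field_simp
  ring

/-- for a nonnegative mean-calibrated predictor `X` of `Y` with
`E[X] = E[Y] > 0`, taking `H = F_X` in the Bregman score
`S = ∫₀^∞ E[(Y−θ)⁺ − (X−θ)⁺] dF_X(θ)` gives
`E[Y]·Gini(X) = E[(Y−X')⁺] − S`, where `Gini(X) = E[|X−X''|]/(2E[X])`,
`X'` is an independent copy of `X` independent of `(Y,X)` and `X''` an
independent copy of `X`. -/
theorem gini_bregman_representation
    {Ω : Type*} {m0 : MeasurableSpace Ω} (μ : Measure Ω) [IsProbabilityMeasure μ]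
    (Y X X' X'' : Ω → ℝ) (hX : Measurable X) (hX' : Measurable X')
    (hX'' : Measurable X'')
    (hY : Integrable Y μ) (hXint : Integrable X μ)
    (hY0 : 0 ≤ᵐ[μ] Y) (hX0 : 0 ≤ᵐ[μ] X)
    (hcal : μ[Y | MeasurableSpace.comap X Real.measurableSpace] =ᵐ[μ] X)
    (hmean : ∫ ω, X ω ∂μ = ∫ ω, Y ω ∂μ) (hpos : 0 < ∫ ω, Y ω ∂μ)
    (hFcont : Continuous (cdf' μ X))
    (hid' : IdentDistrib X' X μ μ) (hid'' : IdentDistrib X'' X μ μ)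
    (hindep' : IndepFun (fun ω => (Y ω, X ω)) X' μ)
    (hindep'' : IndepFun X X'' μ)
    (hintabs : Integrable (fun ω => |X ω - X'' ω|) μ)
    (hintpos : Integrable (fun ω => max (Y ω - X' ω) 0) μ)
    (hintM : Integrable
      (fun θ => ∫ ω, (max (Y ω - θ) 0 - max (X ω - θ) 0) ∂μ) (μ.map X)) :
    (∫ ω, Y ω ∂μ) * ((∫ ω, |X ω - X'' ω| ∂μ) / (2 * ∫ ω, X ω ∂μ))
      = (∫ ω, max (Y ω - X' ω) 0 ∂μ)
        - ∫ θ, (∫ ω, (max (Y ω - θ) 0 - max (X ω - θ) 0) ∂μ) ∂(μ.map X) :=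
  gini_bregman_representation_general (m0 := m0) μ Y X X' X'' hY hXint hmean hpos hid' hid'' hindep'
    hindep'' hintabs hintpos
end
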